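/- Define α₁(H) = (H/2)(β(2H,2H) + 1/(4H-1)) + (1/2)((1-2^{2H}) + (2H-1)/(4H-1) + H·2^{4H}/(4H-1)) + H ∫₀¹ (y^{2H}(1+y)^{2H-1} - y^{2H-1}(1+y)^{2H}) dy, and α₂(H) = α₁(H) + (H²(2H-1)²/2) ζ(4-4H). Then lim_{H→1/2⁻} α₁(H) = 1/2 and lim_{H→1/2⁺} α₂(H) = 1/2. -/

import Mathlib

open MeasureTheory Filter

/-- The constant `α₁(H)` (with `β(a,b) = Γ(a)Γ(b)/Γ(a+b)`). -/
noncomputable def alpha1 (H : ℝ) : ℝ :=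
  H / 2 * (Real.Gamma (2*H) * Real.Gamma (2*H) / Real.Gamma (4*H) + 1 / (4*H - 1))
  + (1/2) * ((1 - (2:ℝ) ^ (2*H)) + (2*H - 1) / (4*H - 1)
      + H * (2:ℝ) ^ (4*H) / (4*H - 1))
  + H * ∫ y in (0:ℝ)..1,
      (y ^ (2*H) * (1 + y) ^ (2*H - 1) - y ^ (2*H - 1) * (1 + y) ^ (2*H))

/-- The constant `α₂(H)`, with `ζ(4-4H) = ∑_{k ≥ 1} k^{4H-4}`. -/
noncomputable def alpha2 (H : ℝ) : ℝ :=
  alpha1 H + (H ^ 2 * (2*H - 1) ^ 2 / 2) * ∑' k : ℕ, ((k : ℝ) + 1) ^ (4*H - 4)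

open Set Topology

/-! Both limits are values at `H = 1/2` of functions continuous there. At `H = 1/2` the
integrand of `α₁` is identically `-1`, and its integral depends continuously on `H` by dominated
convergence, with the bound `2 + 4 y^(-1/2)` for `H ∈ [1/4, 1]`. The extra term of `α₂` carries the
factor `(2H-1)²`, while `ζ(4-4H)` stays below `ζ(3/2)` for `1/2 < H < 5/8`. -/

noncomputable def alphaIntegrand (H y : ℝ) : ℝ :=
  y ^ (2*H) * (1 + y) ^ (2*H - 1) - y ^ (2*H - 1) * (1 + y) ^ (2*H)

lemma continuous_alphaIntegrand_of_pos {y : ℝ} (hy : 0 < y) :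
    Continuous fun H => alphaIntegrand H y := by
  unfold alphaIntegrand
  fun_prop (disch := positivity)

lemma continuousAt_alphaIntegrand_of_pos (H : ℝ) {y : ℝ} (hy : 0 < y) :
    ContinuousAt (alphaIntegrand H) y := by
  have hy' : 0 < 1 + y := by positivity
  unfold alphaIntegrand
  fun_prop (disch := simp [hy.ne', hy'.ne'])

lemma abs_alphaIntegrand_le {H y : ℝ} (hH : H ∈ Icc (1/4) 1) (hy : y ∈ Ioc 0 1) :
    |alphaIntegrand H y| ≤ 2 + 4 * y ^ (-(1/2) : ℝ) := by
  obtain ⟨hH₁, hH₂⟩ := hH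
  obtain ⟨hy₀, hy₁⟩ := hy
  have h1y : 1 ≤ 1 + y := by linarith
  have hfirst : y ^ (2*H) * (1 + y) ^ (2*H - 1) ≤ 1 * 2 := by
    gcongr
    · exact Real.rpow_le_one hy₀.le hy₁ (by linarith)
    · calc (1 + y) ^ (2*H - 1) ≤ (1 + y) ^ (1 : ℝ) := by gcongr; linarith
        _ ≤ 2 := by rw [Real.rpow_one]; linarith
  have hsecond : y ^ (2*H - 1) * (1 + y) ^ (2*H) ≤ y ^ (-(1/2) : ℝ) * 4 := by
    refine mul_le_mul (Real.rpow_le_rpow_of_exponent_ge hy₀ hy₁ (by linarith)) ?_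
      (by positivity) (by positivity)
    calc (1 + y) ^ (2*H) ≤ (1 + y) ^ (2 : ℝ) := by gcongr; linarith
      _ ≤ 4 := by rw [Real.rpow_two]; nlinarith
  have hfirst_nonneg : 0 ≤ y ^ (2*H) * (1 + y) ^ (2*H - 1) := by positivity
  have hsecond_nonneg : 0 ≤ y ^ (2*H - 1) * (1 + y) ^ (2*H) := by positivity
  have hpow_nonneg : 0 ≤ y ^ (-(1/2) : ℝ) := by positivity
  rw [alphaIntegrand, abs_le]
  constructor <;> linarith

lemma continuousAt_integral_alphaIntegrand :
    ContinuousAt (fun H => ∫ y in (0:ℝ)..1, alphaIntegrand H y) (1/2) := by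
  have hIoc : uIoc (0:ℝ) 1 = Ioc 0 1 := uIoc_of_le zero_le_one
  have hIcc : Icc (1/4 : ℝ) 1 ∈ 𝓝 (1/2) := Icc_mem_nhds (by norm_num) (by norm_num)
  refine intervalIntegral.continuousAt_of_dominated_interval
    (bound := fun y => 2 + 4 * y ^ (-(1/2) : ℝ)) ?_ ?_ ?_ ?_
  · refine Eventually.of_forall fun H => ContinuousOn.aestronglyMeasurable ?_ measurableSet_uIoc
    exact fun y hy =>
      (continuousAt_alphaIntegrand_of_pos H (hIoc ▸ hy).1).continuousWithinAt
  · filter_upwards [hIcc] with H hH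
    exact Eventually.of_forall fun y hy => abs_alphaIntegrand_le hH (hIoc ▸ hy)
  · exact intervalIntegrable_const.add
      ((intervalIntegral.intervalIntegrable_rpow' (by norm_num)).const_mul 4)
  · exact Eventually.of_forall fun y hy =>
      (continuous_alphaIntegrand_of_pos (hIoc ▸ hy).1).continuousAt

lemma Real.continuousAt_Gamma_of_pos {s : ℝ} (hs : 0 < s) : ContinuousAt Real.Gamma s :=
  (Real.differentiableAt_Gamma fun m => by linarith [(m.cast_nonneg : (0:ℝ) ≤ m)]).continuousAt

lemma continuousAt_alpha1_half : ContinuousAt alpha1 (1/2) := by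
  have hΓ₂ : ContinuousAt (fun H => Real.Gamma (2 * H)) (1/2) :=
    (Real.continuousAt_Gamma_of_pos (by norm_num)).comp (by fun_prop)
  have hΓ₄ : ContinuousAt (fun H => Real.Gamma (4 * H)) (1/2) :=
    (Real.continuousAt_Gamma_of_pos (by norm_num)).comp (by fun_prop)
  have hI := continuousAt_integral_alphaIntegrand
  unfold alphaIntegrand at hI
  unfold alpha1
  fun_prop (disch := norm_num)

lemma alpha1_half : alpha1 (1/2) = 1/2 := by
  norm_num [alpha1]

lemma summable_nat_add_one_rpow {p : ℝ} (hp : p < -1) :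
    Summable fun k : ℕ => ((k : ℝ) + 1) ^ p := by
  simpa using (summable_nat_add_iff 1).mpr (Real.summable_nat_rpow.mpr hp)

lemma tsum_nat_add_one_rpow_le {p q : ℝ} (hpq : p ≤ q) (hq : q < -1) :
    ∑' k : ℕ, ((k : ℝ) + 1) ^ p ≤ ∑' k : ℕ, ((k : ℝ) + 1) ^ q :=
  (summable_nat_add_one_rpow (hpq.trans_lt hq)).tsum_le_tsum
    (fun k => Real.rpow_le_rpow_of_exponent_le (by linarith [(k.cast_nonneg : (0:ℝ) ≤ k)]) hpq)
    (summable_nat_add_one_rpow hq)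

lemma tendsto_alpha2_sub_alpha1 :
    Tendsto (fun H => alpha2 H - alpha1 H) (𝓝[>] (1/2)) (𝓝 0) := by
  have hfactor : Tendsto (fun H : ℝ => H ^ 2 * (2*H - 1) ^ 2 / 2) (𝓝[>] (1/2)) (𝓝 0) := by
    have : Continuous (fun H : ℝ => H ^ 2 * (2*H - 1) ^ 2 / 2) := by fun_prop
    simpa using (this.tendsto (1/2)).mono_left nhdsWithin_le_nhds
  have hbounded : IsBoundedUnder (· ≤ ·) (𝓝[>] (1/2))
      (fun H : ℝ => ‖∑' k : ℕ, ((k : ℝ) + 1) ^ (4*H - 4)‖) := by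
    refine isBoundedUnder_of_eventually_le (a := ∑' k : ℕ, ((k : ℝ) + 1) ^ (-(3/2) : ℝ)) ?_
    filter_upwards [Ioo_mem_nhdsGT (show (1/2 : ℝ) < 5/8 by norm_num)] with H hH
    rw [Real.norm_of_nonneg (tsum_nonneg fun k => by positivity)]
    exact tsum_nat_add_one_rpow_le (by linarith [hH.2]) (by norm_num)
  simpa [alpha2] using hfactor.zero_mul_isBoundedUnder_le hbounded

theorem stmt12 :
    Filter.Tendsto alpha1 (nhdsWithin (1/2 : ℝ) (Set.Iio (1/2))) (nhds (1/2))
    ∧ Filter.Tendsto alpha2 (nhdsWithin (1/2 : ℝ) (Set.Ioi (1/2))) (nhds (1/2)) := by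
  have h : Tendsto alpha1 (𝓝 (1/2)) (𝓝 (1/2)) := by
    simpa only [alpha1_half] using continuousAt_alpha1_half.tendsto
  refine ⟨h.mono_left nhdsWithin_le_nhds, ?_⟩
  simpa using (h.mono_left nhdsWithin_le_nhds).add tendsto_alpha2_sub_alpha1
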